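/- arXiv:math/0606216 — 5 statements merged into one kernel-verified Lean document; each statement's English description precedes it below -/
import Mathlib

section
/- Assume G₁ is a normal subgroup of G₂, the centralizer of G₁ in G₂ is trivial (C_{G₂}(G₁) = {e}), A ⊆ G₁, and (G₁, A) is a special pair. Then (G₂, A) is a special pair. -/
universe u

section SpecialPair

variable {G : Type u} [Group G]

/-- There is a group isomorphism from `⟨A ∪ {x}⟩` onto `⟨A ∪ {y}⟩` fixing `A`
pointwise and sending `x` to `y`. -/
def FixesAndSends (A : Set G) (x y : G) : Prop :=
  ∃ φ : ↥(Subgroup.closure (A ∪ {x})) ≃* ↥(Subgroup.closure (A ∪ {y})),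
    (∀ g : ↥(Subgroup.closure (A ∪ {x})), (g : G) ∈ A → ((φ g : G) = (g : G))) ∧
    (∀ g : ↥(Subgroup.closure (A ∪ {x})), (g : G) = x → ((φ g : G) = y))

end SpecialPair

/-- `(G, A)` is a special pair: whenever there is an isomorphism from `⟨A ∪ {x}⟩`
onto `⟨A ∪ {y}⟩` fixing `A` pointwise and sending `x` to `y`, then `x = y`. -/
def IsSpecialPair (G : Type u) [Group G] (A : Set G) : Prop :=
  ∀ x y : G, FixesAndSends A x y → x = y

/-!
Let `φ : ⟨A, x⟩ ≅ ⟨A, y⟩` fix `A` and send `x ↦ y`, and put `c = y⁻¹x`. For `a ∈ A`, `φ`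
restricts to an isomorphism `⟨A, xax⁻¹⟩ ≅ ⟨A, yay⁻¹⟩` of the same kind between subgroups of `G₁`
(by normality), so `xax⁻¹ = yay⁻¹` because `(G₁, A)` is special; that is, `c` centralizes `A`.
Conjugation by `c` is then an automorphism of `G₂` fixing `A`, so for every `g ∈ G₁` it restricts
to `⟨A, g⟩ ≅ ⟨A, cgc⁻¹⟩` inside `G₁`, whence `cgc⁻¹ = g`. Thus `c ∈ C_{G₂}(G₁) = {e}` and `x = y`.
-/

section FixesAndSends

variable {G : Type*} [Group G] {A : Set G}

/-- An isomorphism onto `⟨A ∪ {y}⟩` need only be given as an injective map into `G`. -/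
theorem fixesAndSends_of_injective {x y : G} (Ψ : Subgroup.closure (A ∪ {x}) →* G)
    (hΨ : Function.Injective Ψ) (hfix : ∀ g : Subgroup.closure (A ∪ {x}), (g : G) ∈ A → Ψ g = g)
    (hsend : ∀ g : Subgroup.closure (A ∪ {x}), (g : G) = x → Ψ g = y) :
    FixesAndSends A x y := by
  have hrange : Ψ.range = Subgroup.closure (A ∪ {y}) := by
    apply le_antisymm
    · rw [MonoidHom.range_eq_map, ← Subgroup.closure_closure_coe_preimage, MonoidHom.map_closure,
        Subgroup.closure_le]
      rintro _ ⟨g, hg | hg, rfl⟩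
      · exact Subgroup.subset_closure (Or.inl ((hfix g hg).symm ▸ hg))
      · exact Subgroup.subset_closure (Or.inr (hsend g hg))
    · rw [Subgroup.closure_le]
      rintro g (hg | rfl)
      · exact ⟨⟨g, Subgroup.subset_closure (Or.inl hg)⟩, hfix _ hg⟩
      · exact ⟨⟨x, Subgroup.subset_closure (Or.inr rfl)⟩, hsend _ rfl⟩
  exact ⟨(MonoidHom.ofInjective hΨ).trans (MulEquiv.subgroupCongr hrange), hfix, hsend⟩

theorem fixesAndSends_map_of_injective (f : G →* G) (hf : Function.Injective f)
    (hfA : ∀ a ∈ A, f a = a) (g : G) : FixesAndSends A g (f g) :=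
  fixesAndSends_of_injective (f.comp (Subgroup.closure _).subtype)
    (hf.comp Subtype.val_injective) (fun _ ha => hfA _ ha) (fun _ hg => congrArg f hg)

theorem FixesAndSends.conj {x y a : G} (h : FixesAndSends A x y) (ha : a ∈ A) :
    FixesAndSends A (x * a * x⁻¹) (y * a * y⁻¹) := by
  obtain ⟨φ, hfix, hsend⟩ := h
  have hx : x ∈ Subgroup.closure (A ∪ {x}) := Subgroup.subset_closure (Or.inr rfl)
  have ha' : a ∈ Subgroup.closure (A ∪ {x}) := Subgroup.subset_closure (Or.inl ha)
  have hle : Subgroup.closure (A ∪ {x * a * x⁻¹}) ≤ Subgroup.closure (A ∪ {x}) := by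
    rw [Subgroup.closure_le]
    rintro g (hg | rfl)
    · exact Subgroup.subset_closure (Or.inl hg)
    · exact mul_mem (mul_mem hx ha') (inv_mem hx)
  refine fixesAndSends_of_injective
    ((Subgroup.closure _).subtype.comp (φ.toMonoidHom.comp (Subgroup.inclusion hle)))
    (Subtype.val_injective.comp (φ.injective.comp (Subgroup.inclusion_injective hle)))
    (fun g hg => hfix _ hg) (fun g hg => ?_)
  have hg' : Subgroup.inclusion hle g = ⟨x, hx⟩ * ⟨a, ha'⟩ * ⟨x, hx⟩⁻¹ := Subtype.ext hg
  change ((φ (Subgroup.inclusion hle g) : G)) = _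
  rw [hg', map_mul, map_mul, map_inv]
  push_cast
  rw [hsend ⟨x, hx⟩ rfl, hfix ⟨a, ha'⟩ ha]

/-- Since `φ` maps `⟨A ∪ {u}⟩` onto `⟨A ∪ {v}⟩ ≤ N`, it restricts to the corresponding
subgroups of `N`. -/
theorem FixesAndSends.subgroup {N : Subgroup G} (hA : A ⊆ N) {u v : N}
    (h : FixesAndSends A (u : G) v) : FixesAndSends {a : N | (a : G) ∈ A} u v := by
  obtain ⟨φ, hfix, hsend⟩ := h
  have hle : Subgroup.closure ({a : N | (a : G) ∈ A} ∪ {u}) ≤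
      (Subgroup.closure (A ∪ {(u : G)})).comap N.subtype := by
    rw [Subgroup.closure_le]
    rintro g (hg | rfl)
    · exact Subgroup.subset_closure (Or.inl hg)
    · exact Subgroup.subset_closure (Or.inr rfl)
  have hN : Subgroup.closure (A ∪ {(v : G)}) ≤ N :=
    (Subgroup.closure_le _).2 (Set.union_subset hA (Set.singleton_subset_iff.2 v.2))
  let ι : Subgroup.closure ({a : N | (a : G) ∈ A} ∪ {u}) →* Subgroup.closure (A ∪ {(u : G)}) :=
    (N.subtype.comp (Subgroup.closure _).subtype).codRestrict _ (fun g => hle g.2)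
  let Ψ : Subgroup.closure ({a : N | (a : G) ∈ A} ∪ {u}) →* N :=
    ((Subgroup.closure _).subtype.comp (φ.toMonoidHom.comp ι)).codRestrict N
      (fun g => hN (φ (ι g)).2)
  refine fixesAndSends_of_injective Ψ (fun g g' hgg' => ?_) (fun g hg => Subtype.ext (hfix _ hg))
    (fun g hg => Subtype.ext (hsend _ (congrArg Subtype.val hg)))
  have hι : ι g = ι g' := φ.injective (Subtype.ext (congrArg Subtype.val hgg' :))
  exact Subtype.ext (Subtype.ext (congrArg Subtype.val hι :))

end FixesAndSends

theorem IsSpecialPair.eq_of_fixesAndSends {G : Type u} [Group G] {N : Subgroup G} {A : Set G}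
    (hN : IsSpecialPair N {a : N | (a : G) ∈ A}) (hA : A ⊆ N) {u v : G} (hu : u ∈ N)
    (hv : v ∈ N) (h : FixesAndSends A u v) : u = v :=
  congrArg Subtype.val (hN ⟨u, hu⟩ ⟨v, hv⟩ (h.subgroup (u := ⟨u, hu⟩) (v := ⟨v, hv⟩) hA))

/-- If `G₁ ⊴ G₂`, `C_{G₂}(G₁) = {e}`, `A ⊆ G₁` and `(G₁, A)` is a special pair,
then `(G₂, A)` is a special pair. -/
theorem isSpecialPair_of_normal_of_centralizer_trivial {G₂ : Type u} [Group G₂]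
    (G₁ : Subgroup G₂) [G₁.Normal]
    (hcent : Subgroup.centralizer (G₁ : Set G₂) = ⊥)
    (A : Set G₂) (hA : A ⊆ (G₁ : Set G₂))
    (hspec : IsSpecialPair ↥G₁ {a : ↥G₁ | (a : G₂) ∈ A}) :
    IsSpecialPair G₂ A := by
  intro x y hxy
  have hcA : y⁻¹ * x ∈ Subgroup.centralizer A := by
    refine Subgroup.mem_centralizer_iff.2 fun a ha => ?_
    have hconj : x * a * x⁻¹ = y * a * y⁻¹ := hspec.eq_of_fixesAndSends hA
      (Subgroup.Normal.conj_mem ‹_› a (hA ha) x) (Subgroup.Normal.conj_mem ‹_› a (hA ha) y)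
      (hxy.conj ha)
    calc a * (y⁻¹ * x) = y⁻¹ * (y * a * y⁻¹) * x := by group
      _ = y⁻¹ * x * a := by rw [← hconj]; group
  have hcG₁ : y⁻¹ * x ∈ Subgroup.centralizer (G₁ : Set G₂) := by
    refine Subgroup.mem_centralizer_iff.2 fun g hg => ?_
    have hfix : ∀ a ∈ A, MulAut.conj (y⁻¹ * x) a = a := fun a ha =>
      mul_inv_eq_of_eq_mul (Subgroup.mem_centralizer_iff.1 hcA a ha).symm
    have hg' : g = (y⁻¹ * x) * g * (y⁻¹ * x)⁻¹ := hspec.eq_of_fixesAndSends hA hg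
      (Subgroup.Normal.conj_mem ‹_› g hg _)
      (fixesAndSends_map_of_injective (MulAut.conj (y⁻¹ * x)).toMonoidHom
        (MulAut.conj (y⁻¹ * x)).injective hfix g)
    exact (mul_inv_eq_iff_eq_mul.1 hg'.symm).symm
  rw [hcent, Subgroup.mem_bot, inv_mul_eq_one] at hcG₁
  exact hcG₁.symm
end

section
/- Assume G₁ is a normal subgroup of G₂, the centralizer of G₁ in G₂ is trivial (C_{G₂}(G₁) = {e}), A ⊆ G₁, and (G₁, A) is a special pair. Then the centralizer of A in G₂ is trivial: C_{G₂}(A) = {e}. -/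
universe u

section SpecialPair

variable {G : Type u} [Group G] {A : Set G}

theorem fixesAndSends_of_forall_mem_apply_eq (φ : G ≃* G) (hφ : ∀ a ∈ A, φ a = a) (x : G) :
    FixesAndSends A x (φ x) := by
  have himage : φ '' (A ∪ {x}) = A ∪ {φ x} := by
    rw [Set.image_union, Set.image_singleton, Set.image_congr hφ, Set.image_id']
  have hmap : (Subgroup.closure (A ∪ {x})).map (φ : G →* G) = Subgroup.closure (A ∪ {φ x}) := by
    rw [MonoidHom.map_closure]
    exact congrArg Subgroup.closure himage
  exact ⟨(φ.subgroupMap _).trans (MulEquiv.subgroupCongr hmap), fun g hg => hφ g hg,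
    fun g hg => congrArg φ hg⟩

theorem IsSpecialPair.apply_eq_of_forall_mem_apply_eq (hA : IsSpecialPair G A) (φ : G ≃* G)
    (hφ : ∀ a ∈ A, φ a = a) (x : G) : φ x = x :=
  (hA x (φ x) (fixesAndSends_of_forall_mem_apply_eq φ hφ x)).symm

end SpecialPair

theorem MulAut.conjNormal_apply_eq_iff_commute {G : Type*} [Group G] {H : Subgroup G} [H.Normal]
    (g : G) (h : H) : MulAut.conjNormal g h = h ↔ Commute g h := by
  rw [← Subtype.coe_inj, MulAut.conjNormal_apply, mul_inv_eq_iff_eq_mul]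
  rfl

theorem centralizer_trivial_of_normal_of_specialPair_general {G₂ : Type u} [Group G₂]
    (G₁ : Subgroup G₂) [G₁.Normal]
    (hcent : Subgroup.centralizer (G₁ : Set G₂) = ⊥)
    (A : Set G₂)
    (hspec : IsSpecialPair ↥G₁ {a : ↥G₁ | (a : G₂) ∈ A}) :
    Subgroup.centralizer A = ⊥ := by
  refine eq_bot_iff.mpr fun c hc => hcent ▸ ?_
  have hconj : ∀ h : G₁, MulAut.conjNormal c h = h :=
    hspec.apply_eq_of_forall_mem_apply_eq _ fun a ha =>
      (MulAut.conjNormal_apply_eq_iff_commute c a).mpr (Subgroup.mem_centralizer_iff.mp hc a ha).symm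
  exact Subgroup.mem_centralizer_iff.mpr fun h hh =>
    ((MulAut.conjNormal_apply_eq_iff_commute c ⟨h, hh⟩).mp (hconj ⟨h, hh⟩)).symm

/-- If `G₁ ⊴ G₂`, `C_{G₂}(G₁) = {e}`, `A ⊆ G₁` and `(G₁, A)` is a special pair,
then the centralizer of `A` in `G₂` is trivial: `C_{G₂}(A) = {e}`. -/
theorem centralizer_trivial_of_normal_of_specialPair {G₂ : Type u} [Group G₂]
    (G₁ : Subgroup G₂) [G₁.Normal]
    (hcent : Subgroup.centralizer (G₁ : Set G₂) = ⊥)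
    (A : Set G₂) (hA : A ⊆ (G₁ : Set G₂))
    (hspec : IsSpecialPair ↥G₁ {a : ↥G₁ | (a : G₂) ∈ A}) :
    Subgroup.centralizer A = ⊥ :=
  centralizer_trivial_of_normal_of_specialPair_general G₁ hcent A hspec
end

section
/- If G is a centerless group, then the pair (Aut(G), Inn(G)) is a special pair, where Inn(G) is regarded as a subset of Aut(G). -/
/-!
For `g : G`, the automorphism `x ∘ conj g ∘ x⁻¹` is the inner automorphism `conj (x g)`. An
isomorphism fixing `Inn(G)` and sending `x` to `y` therefore identifies `conj (x g)` with
`conj (y g)`, and since `G` is centerless, `conj` is injective, so `x g = y g` for every `g`.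
-/

universe u

theorem FixesAndSends.mul_mul_inv_eq {G : Type u} [Group G] {A : Set G} {x y a : G}
    (h : FixesAndSends A x y) (ha : a ∈ A) (hxa : x * a * x⁻¹ ∈ A) :
    x * a * x⁻¹ = y * a * y⁻¹ := by
  obtain ⟨φ, hfix, hsend⟩ := h
  let X : Subgroup.closure (A ∪ {x}) := ⟨x, Subgroup.subset_closure (Or.inr rfl)⟩
  let a' : Subgroup.closure (A ∪ {x}) := ⟨a, Subgroup.subset_closure (Or.inl ha)⟩
  calc x * a * x⁻¹ = φ (X * a' * X⁻¹) := (hfix (X * a' * X⁻¹) hxa).symm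
    _ = y * a * y⁻¹ := by
      simp only [map_mul, map_inv, Subgroup.coe_mul, Subgroup.coe_inv, hsend X rfl, hfix a' ha]
      rfl

theorem MulAut.ker_conj (G : Type u) [Group G] :
    (MulAut.conj : G →* MulAut G).ker = Subgroup.center G := by
  ext g
  simp only [MonoidHom.mem_ker, DFunLike.ext_iff, MulAut.conj_apply, MulAut.one_apply,
    Subgroup.mem_center_iff, mul_inv_eq_iff_eq_mul]
  exact forall_congr' fun _ => eq_comm

theorem MulAut.mul_conj_mul_inv {G : Type u} [Group G] (x : MulAut G) (g : G) :
    x * MulAut.conj g * x⁻¹ = MulAut.conj (x g) := by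
  ext a
  simp [mul_assoc]

/-- If `G` is a centerless group, then `(Aut(G), Inn(G))` is a special pair,
where `Inn(G)` (the image of `g ↦` conjugation by `g`) is regarded as a subset
of `Aut(G)`. -/
theorem isSpecialPair_aut_inn (G : Type u) [Group G] (hG : Subgroup.center G = ⊥) :
    IsSpecialPair (MulAut G)
      (((MulAut.conj : G →* MulAut G).range : Subgroup (MulAut G)) : Set (MulAut G)) := by
  intro x y h
  have conj_injective : Function.Injective (MulAut.conj : G →* MulAut G) := by
    rw [← MonoidHom.ker_eq_bot_iff, MulAut.ker_conj, hG]
  ext g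
  apply conj_injective
  rw [← MulAut.mul_conj_mul_inv, ← MulAut.mul_conj_mul_inv]
  exact h.mul_mul_inv_eq ⟨g, rfl⟩ ⟨x g, (MulAut.mul_conj_mul_inv x g).symm⟩
end

section
/- Let G be a centerless group with automorphism tower ⟨G^α⟩, and let β < γ be ordinals. Then the centralizer of G in G^γ is trivial (C_{G^γ}(G) = {e}), and the normalizer of G^β in G^γ equals G^{β+1}: N_{G^γ}(G^β) = G^{β+1}. -/
universe u

/-- The automorphism tower of a centerless group `G`: an ordinal-indexed increasing
continuous chain of groups, starting at `G`, where each successor stage is (identified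
with) the automorphism group of the previous stage via the conjugation embedding. -/
structure AutTower (G : Type u) [Group G] where
  /-- the `o`-th stage `G^o` of the tower -/
  Stage : Ordinal.{u} → GrpCat.{u}
  /-- the inclusion maps of the tower -/
  map : ∀ ⦃o₁ o₂ : Ordinal.{u}⦄, o₁ ≤ o₂ → (↥(Stage o₁) →* ↥(Stage o₂))
  map_id : ∀ (o : Ordinal.{u}) (x : ↥(Stage o)), map le_rfl x = x
  map_comp : ∀ ⦃o₁ o₂ o₃ : Ordinal.{u}⦄ (h₁ : o₁ ≤ o₂) (h₂ : o₂ ≤ o₃) (x : ↥(Stage o₁)),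
      map h₂ (map h₁ x) = map (h₁.trans h₂) x
  map_injective : ∀ ⦃o₁ o₂ : Ordinal.{u}⦄ (h : o₁ ≤ o₂), Function.Injective (map h)
  /-- the identification of `G` with the `0`-th stage -/
  emb0 : G ≃* ↥(Stage 0)
  /-- the identification of the `(o+1)`-st stage with `Aut(G^o)` -/
  succIso : ∀ o : Ordinal.{u}, ↥(Stage (o + 1)) ≃* MulAut ↥(Stage o)
  /-- under the above identification, the inclusion `G^o ≤ G^{o+1}` is `g ↦` conjugation by `g` -/
  succIso_map : ∀ (o : Ordinal.{u}) (x : ↥(Stage o)),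
      succIso o (map (show o ≤ o + 1 by simp) x) = MulAut.conj x
  /-- at limit stages the tower is continuous: `G^δ = ⋃_{α<δ} G^α` -/
  limit_covers : ∀ (o : Ordinal.{u}), Order.IsSuccLimit o → ∀ x : ↥(Stage o),
      ∃ (o' : Ordinal.{u}) (h : o' < o), x ∈ Set.range (map h.le)

namespace AutTower

variable {G : Type u} [Group G]

/-- the embedding of `G` into the `o`-th stage of its automorphism tower -/
def embed (T : AutTower G) (o : Ordinal.{u}) : G →* ↥(T.Stage o) :=
  (T.map (show (0 : Ordinal.{u}) ≤ o by simp)).comp T.emb0.toMonoidHom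

/-- `G^{o+1} = G^o`, i.e. the inclusion of stage `o` into stage `o+1` is onto -/
def StabilizesAt (T : AutTower G) (o : Ordinal.{u}) : Prop :=
  Function.Surjective (T.map (show o ≤ o + 1 by simp))

end AutTower

/-!
An element `x ∈ G^{α+1}` centralizing `G` is an automorphism `π` of `G^α` fixing `G` pointwise.
If an automorphism `π` fixes pointwise a set `S` with trivial centralizer, it also fixes every `y`
normalizing `S`, since `y⁻¹ π(y)` centralizes `S`. As `G^{β+1}` normalizes `G^β` and, by the outer
induction, `G` has trivial centralizer in `G^α`, induction on `β ≤ α` shows that `π` fixes all of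
`G^α`, so `x = 1`; limit stages are unions of earlier ones.

An `x ∈ G^γ` normalizing `G^β` acts on `G^β` by conjugation, i.e. as some `w ∈ G^{β+1}`; then
`w` and `x` conjugate `G^β ⊇ G` alike, so `w⁻¹x` centralizes `G` and `x = w`.
-/

section CentralizerEqBot

variable {A : Type*} [Group A] {S : Set A}

theorem Subgroup.eq_of_forall_conj_eq_of_centralizer_eq_bot (hS : centralizer S = ⊥) {a b : A}
    (hab : ∀ s ∈ S, a * s * a⁻¹ = b * s * b⁻¹) : a = b := by
  have hmem : b⁻¹ * a ∈ centralizer S := fun s hs => by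
    rw [mul_assoc, mul_inv_eq_iff_eq_mul.mp (hab s hs)]
    group
  rw [hS, mem_bot, inv_mul_eq_one] at hmem
  exact hmem.symm

theorem MulAut.apply_eq_self_of_centralizer_eq_bot (hS : Subgroup.centralizer S = ⊥)
    (π : MulAut A) (hπ : ∀ s ∈ S, π s = s) {y : A} (hy : ∀ s ∈ S, y * s * y⁻¹ ∈ S) :
    π y = y :=
  Subgroup.eq_of_forall_conj_eq_of_centralizer_eq_bot hS fun s hs => by
    rw [← hπ s hs, ← map_inv, ← map_mul, ← map_mul, hπ s hs, hπ _ (hy s hs)]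

end CentralizerEqBot

namespace AutTower

variable {G : Type u} [Group G] (T : AutTower G)

theorem map_succIso_apply (α : Ordinal.{u}) (x : T.Stage (α + 1)) (y : T.Stage α) :
    T.map le_self_add (T.succIso α x y) = x * T.map le_self_add y * x⁻¹ := by
  apply (T.succIso α).injective
  ext z
  simp [T.succIso_map]

theorem map_conj_map {β γ : Ordinal.{u}} (h₁ : β + 1 ≤ γ) (h : β ≤ γ) (w : T.Stage (β + 1))
    (y : T.Stage β) :
    T.map h₁ w * T.map h y * (T.map h₁ w)⁻¹ = T.map h (T.succIso β w y) := by
  rw [← T.map_comp le_self_add h₁ y, ← T.map_comp le_self_add h₁ (T.succIso β w y),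
    map_succIso_apply]
  simp

theorem embed_eq_map {β γ : Ordinal.{u}} (h : β ≤ γ) (g : G) :
    T.embed γ g = T.map h (T.embed β g) :=
  (T.map_comp zero_le h (T.emb0 g)).symm

theorem range_embed_subset {β γ : Ordinal.{u}} (h : β ≤ γ) :
    Set.range (T.embed γ) ⊆ Set.range (T.map h) := by
  rintro _ ⟨g, rfl⟩
  exact ⟨_, (T.embed_eq_map h g).symm⟩

theorem centralizer_range_embed_zero_eq_bot (hG : Subgroup.center G = ⊥) :
    Subgroup.centralizer (Set.range (T.embed 0)) = ⊥ := by
  refine (Subgroup.eq_bot_iff_forall _).2 fun x hx => ?_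
  obtain ⟨g, rfl⟩ := T.emb0.surjective x
  have hg : g ∈ Subgroup.center G := Subgroup.mem_center_iff.2 fun k =>
    T.emb0.injective (by simpa [embed, T.map_id] using hx _ ⟨k, rfl⟩)
  rw [hG, Subgroup.mem_bot] at hg
  rw [hg, map_one]

theorem succIso_apply_map_eq_self {α : Ordinal.{u}}
    (hα : Subgroup.centralizer (Set.range (T.embed α)) = ⊥) {x : T.Stage (α + 1)}
    (hx : x ∈ Subgroup.centralizer (Set.range (T.embed (α + 1)))) :
    ∀ β (hβ : β ≤ α) (y : T.Stage β), T.succIso α x (T.map hβ y) = T.map hβ y := by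
  intro β
  induction β using Ordinal.limitRecOn with
  | zero =>
    intro hβ y
    apply T.map_injective le_self_add
    obtain ⟨g, rfl⟩ := T.emb0.surjective y
    have hy : T.map hβ (T.emb0 g) = T.embed α g := rfl
    rw [hy, map_succIso_apply, ← T.embed_eq_map, (hx _ ⟨g, rfl⟩).symm, mul_inv_cancel_right]
  | add_one β ih =>
    intro hβ y
    have hβα : β ≤ α := le_self_add.trans hβ
    refine MulAut.apply_eq_self_of_centralizer_eq_bot
      (eq_bot_mono (Subgroup.centralizer_le (T.range_embed_subset hβα)) hα) _ ?_ ?_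
    · rintro _ ⟨z, rfl⟩
      exact ih hβα z
    · rintro _ ⟨z, rfl⟩
      exact ⟨_, (T.map_conj_map hβ hβα y z).symm⟩
  | limit β hβ ih =>
    intro hβα y
    obtain ⟨β', hβ', y', rfl⟩ := T.limit_covers β hβ y
    rw [T.map_comp]
    exact ih β' hβ' _ y'

theorem centralizer_range_embed_add_one_eq_bot {α : Ordinal.{u}}
    (hα : Subgroup.centralizer (Set.range (T.embed α)) = ⊥) :
    Subgroup.centralizer (Set.range (T.embed (α + 1))) = ⊥ := by
  refine (Subgroup.eq_bot_iff_forall _).2 fun x hx => (T.succIso α).injective ?_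
  ext y
  simpa [T.map_id] using T.succIso_apply_map_eq_self hα hx α le_rfl y

theorem centralizer_range_embed_eq_bot_of_isSuccLimit {γ : Ordinal.{u}} (hγ : Order.IsSuccLimit γ)
    (ih : ∀ α < γ, Subgroup.centralizer (Set.range (T.embed α)) = ⊥) :
    Subgroup.centralizer (Set.range (T.embed γ)) = ⊥ := by
  refine (Subgroup.eq_bot_iff_forall _).2 fun x hx => ?_
  obtain ⟨α, hαγ, x', rfl⟩ := T.limit_covers γ hγ x
  suffices x' ∈ Subgroup.centralizer (Set.range (T.embed α)) by
    rw [ih α hαγ, Subgroup.mem_bot] at this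
    rw [this, map_one]
  rintro _ ⟨g, rfl⟩
  apply T.map_injective hαγ.le
  simpa [← T.embed_eq_map] using hx _ ⟨g, rfl⟩

theorem centralizer_range_embed_eq_bot (hG : Subgroup.center G = ⊥) (γ : Ordinal.{u}) :
    Subgroup.centralizer (Set.range (T.embed γ)) = ⊥ := by
  induction γ using Ordinal.limitRecOn with
  | zero => exact T.centralizer_range_embed_zero_eq_bot hG
  | add_one α ih => exact T.centralizer_range_embed_add_one_eq_bot ih
  | limit γ hγ ih => exact T.centralizer_range_embed_eq_bot_of_isSuccLimit hγ ih

theorem range_map_add_one_le_normalizer {β γ : Ordinal.{u}} (h : β < γ) :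
    (T.map (Order.add_one_le_iff.mpr h)).range ≤
      Subgroup.normalizer ((T.map h.le).range : Set _) := by
  rintro _ ⟨w, rfl⟩ n
  have hconj := T.map_conj_map (Order.add_one_le_iff.mpr h) h.le
  constructor
  · rintro ⟨y, rfl⟩
    exact ⟨_, (hconj w y).symm⟩
  · rintro ⟨y, hy⟩
    refine ⟨T.succIso β w⁻¹ y, ?_⟩
    rw [← hconj, hy, map_inv]
    group

theorem normalizer_le_range_map_add_one {β γ : Ordinal.{u}} (h : β < γ)
    (hγ : Subgroup.centralizer (Set.range (T.embed γ)) = ⊥) :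
    Subgroup.normalizer ((T.map h.le).range : Set _) ≤
      (T.map (Order.add_one_le_iff.mpr h)).range := by
  intro x hx
  let e := MonoidHom.ofInjective (T.map_injective h.le)
  let σ : MulAut (T.Stage β) := MulAut.congr e.symm (Subgroup.normalizerMonoidHom _ ⟨x, hx⟩)
  refine ⟨(T.succIso β).symm σ, Subgroup.eq_of_forall_conj_eq_of_centralizer_eq_bot
    (eq_bot_mono (Subgroup.centralizer_le (T.range_embed_subset h.le)) hγ) ?_⟩
  rintro _ ⟨y, rfl⟩
  rw [T.map_conj_map, MulEquiv.apply_symm_apply]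
  simp only [σ, e, MulAut.congr_apply, MulEquiv.symm_symm, MonoidHom.coe_range,
    MulEquiv.trans_apply, MonoidHom.apply_ofInjective_symm]
  rfl

theorem normalizer_range_map_eq {β γ : Ordinal.{u}} (h : β < γ)
    (hγ : Subgroup.centralizer (Set.range (T.embed γ)) = ⊥) :
    Subgroup.normalizer ((T.map h.le).range : Set _) =
      (T.map (Order.add_one_le_iff.mpr h)).range :=
  (T.normalizer_le_range_map_add_one h hγ).antisymm (T.range_map_add_one_le_normalizer h)

end AutTower

/-- If `G` is centerless and `β < γ`, then in the automorphism tower of `G` the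
centralizer of `G` in `G^γ` is trivial, `C_{G^γ}(G) = {e}`, and the normalizer of
`G^β` in `G^γ` is `G^{β+1}`: `N_{G^γ}(G^β) = G^{β+1}` (stages being regarded as
subgroups of `G^γ` via the tower embeddings). -/
theorem centralizer_trivial_and_normalizer_eq_succ {G : Type u} [Group G]
    (hG : Subgroup.center G = ⊥) (T : AutTower G) (β γ : Ordinal.{u}) (h : β < γ) :
    Subgroup.centralizer (Set.range (T.embed γ)) = ⊥ ∧
      Subgroup.normalizer ((T.map h.le).range : Set _) = (T.map (Order.add_one_le_iff.mpr h)).range := by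
  have hγ := T.centralizer_range_embed_eq_bot hG γ
  exact ⟨hγ, T.normalizer_range_map_eq h hγ⟩
end

section
/- Let G be a group whose center Z(G) = {e, a} has exactly two elements, and suppose H₁ ≠ H₂ are two distinct subgroups of G of index 2 such that Z(H₁) = Z(H₂) = Z(G). Then (Aut(G), Inn(G)) is not a special pair: the maps x_i (i = 1,2) defined by x_i(g) = g for g ∈ H_i and x_i(g) = ag for g ∉ H_i are two distinct automorphisms of G, neither inner, and there is an isomorphism from ⟨Inn(G) ∪ {x₁}⟩ onto ⟨Inn(G) ∪ {x₂}⟩ fixing Inn(G) pointwise and sending x₁ to x₂. -/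
universe u

/-!
For a central involution `a` and a subgroup `H` of index 2 containing it, the twist
`g ↦ g` on `H`, `g ↦ a * g` off `H`, is an involutive automorphism commuting with every
automorphism that preserves `H` and fixes `a`: with all inner automorphisms, and with the
twist along any other such subgroup. It is not inner: conjugation by `c` that fixes exactly `H`
must fix `c`, so `c ∈ H` centralises `H`; then `c ∈ Z(H) = Z(G)`, so the
conjugation is trivial, whereas the twist moves every element outside `H`.

If `x` and `y` are commuting involutions outside a subgroup `N` that centralise it, then `N`
has index 2 in `⟨N, x⟩` and in `⟨N, y⟩`, and twisting by `y * x` off `N` is an isomorphism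
`⟨N, x⟩ ≃* ⟨N, y⟩` fixing `N` and sending `x` to `y`.
-/

namespace Subgroup

section Twist

variable {G : Type*} [Group G] (H : Subgroup G) (a : G)

open Classical in
noncomputable def twist (g : G) : G := if g ∈ H then g else a * g

variable {H a} {g h : G}

theorem twist_of_mem (hg : g ∈ H) : H.twist a g = g := if_pos hg

theorem twist_of_notMem (hg : g ∉ H) : H.twist a g = a * g := if_neg hg

theorem twist_mul (ha : a * a = 1) (hag : Commute a g) (hgh : g * h ∈ H ↔ (g ∈ H ↔ h ∈ H)) :
    H.twist a (g * h) = H.twist a g * H.twist a h := by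
  by_cases hg : g ∈ H <;> by_cases hh : h ∈ H
  · rw [twist_of_mem hg, twist_of_mem hh, twist_of_mem (by tauto)]
  · rw [twist_of_mem hg, twist_of_notMem hh, twist_of_notMem (by tauto), ← mul_assoc,
      hag.eq, mul_assoc]
  · rw [twist_of_notMem hg, twist_of_mem hh, twist_of_notMem (by tauto), mul_assoc]
  · rw [twist_of_notMem hg, twist_of_notMem hh, twist_of_mem (by tauto), mul_assoc,
      ← mul_assoc g, ← hag.eq, ← mul_assoc, ← mul_assoc, ha, one_mul]

theorem twist_twist {b : G} (hba : b * a = 1) (hg : g ∉ H → a * g ∉ H) :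
    H.twist b (H.twist a g) = g := by
  by_cases hgH : g ∈ H
  · rw [twist_of_mem hgH, twist_of_mem hgH]
  · rw [twist_of_notMem hgH, twist_of_notMem (hg hgH), ← mul_assoc, hba, one_mul]

theorem twist_twist_self (ha : a * a = 1) (haH : a ∈ H) : H.twist a (H.twist a g) = g :=
  twist_twist ha fun hg => by rwa [H.mul_mem_cancel_left haH]

theorem twist_mem_iff {K : Subgroup G} (haK : a ∈ K) : H.twist a g ∈ K ↔ g ∈ K := by
  by_cases hg : g ∈ H
  · rw [twist_of_mem hg]
  · rw [twist_of_notMem hg, K.mul_mem_cancel_left haK]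

theorem twist_eq_self_iff (ha : a ≠ 1) : H.twist a g = g ↔ g ∈ H := by
  by_cases hg : g ∈ H
  · simp only [twist_of_mem hg, hg]
  · simp only [twist_of_notMem hg, hg, mul_eq_right, ha]

theorem twist_left_injective (ha : a ≠ 1) : Function.Injective (twist · a : Subgroup G → G → G) :=
  fun H K hHK => by
    ext g
    rw [← twist_eq_self_iff ha, ← twist_eq_self_iff ha, show H.twist a = K.twist a from hHK]

theorem map_twist {G' F : Type*} [Group G'] [FunLike F G G'] [MonoidHomClass F G G']
    {H' : Subgroup G'} (f : F) (hf : ∀ g, f g ∈ H' ↔ g ∈ H) :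
    f (H.twist a g) = H'.twist (f a) (f g) := by
  by_cases hg : g ∈ H
  · rw [twist_of_mem hg, twist_of_mem ((hf g).mpr hg)]
  · rw [twist_of_notMem hg, twist_of_notMem (mt (hf g).mp hg), map_mul]

end Twist

theorem mul_self_eq_one_of_coe_eq_pair {G : Type*} [Group G] {K : Subgroup G} {a : G}
    (hK : (K : Set G) = {1, a}) (ha : a ≠ 1) : a * a = 1 := by
  have haK : a ∈ K := by rw [← SetLike.mem_coe, hK]; exact Or.inr rfl
  have haa : a * a ∈ (K : Set G) := K.mul_mem haK haK
  rw [hK] at haa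
  exact haa.resolve_right fun h => ha (mul_eq_left.mp h)

section Automorphism

variable {G : Type*} [Group G] {H : Subgroup G} {a : G}

theorem exists_mulAut_coe_eq_twist (hH : H.index = 2) (hac : a ∈ center G) (ha : a * a = 1)
    (haH : a ∈ H) : ∃ φ : MulAut G, ⇑φ = H.twist a :=
  ⟨{ toFun := H.twist a
     invFun := H.twist a
     left_inv := fun _ => twist_twist_self ha haH
     right_inv := fun _ => twist_twist_self ha haH
     map_mul' := fun g _ =>
       twist_mul ha (mem_center_iff.mp hac g).symm (mul_mem_iff_of_index_two hH) }, rfl⟩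

variable {φ : MulAut G}

theorem mul_self_eq_one_of_coe_eq_twist (hφ : ⇑φ = H.twist a) (ha : a * a = 1) (haH : a ∈ H) :
    φ * φ = 1 :=
  MulEquiv.ext fun _ => by
    rw [MulAut.mul_apply, hφ, twist_twist_self ha haH, MulAut.one_apply]

theorem commute_of_coe_eq_twist (hφ : ⇑φ = H.twist a) {ψ : MulAut G}
    (hψH : ∀ g, ψ g ∈ H ↔ g ∈ H) (hψa : ψ a = a) : Commute φ ψ :=
  MulEquiv.ext fun _ => by
    rw [MulAut.mul_apply, MulAut.mul_apply, hφ, map_twist ψ hψH, hψa]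

theorem commute_of_mem_range_conj (hφ : ⇑φ = H.twist a) (hH : H.Normal) (hac : a ∈ center G) :
    ∀ ψ ∈ (MulAut.conj : G →* MulAut G).range, Commute φ ψ := by
  rintro _ ⟨c, rfl⟩
  exact commute_of_coe_eq_twist hφ
    (fun g => by rw [MulAut.conj_apply, hH.mem_comm_iff, inv_mul_cancel_left])
    (by rw [MulAut.conj_apply, mem_center_iff.mp hac c, mul_inv_cancel_right])

theorem notMem_range_conj_of_coe_eq_twist (hφ : ⇑φ = H.twist a) (hH : H ≠ ⊤)
    (hZ : (center H).map H.subtype ≤ center G) (ha : a ≠ 1) :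
    φ ∉ (MulAut.conj : G →* MulAut G).range := by
  rintro ⟨c, rfl⟩
  have hfix : ∀ g, c * g * c⁻¹ = g → g ∈ H := fun g hg =>
    (twist_eq_self_iff ha).mp ((congrFun hφ g).symm.trans hg)
  have hcH : c ∈ H := hfix c (mul_inv_cancel_right c c)
  have hcZ : c ∈ center G := by
    refine hZ ⟨⟨c, hcH⟩, mem_center_iff.mpr fun h => Subtype.ext ?_, rfl⟩
    have hch : c * h * c⁻¹ = h := (congrFun hφ h).trans (twist_of_mem h.2)
    exact (mul_inv_eq_iff_eq_mul.mp hch).symm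
  obtain ⟨g, hg⟩ := SetLike.exists_not_mem_of_ne_top H hH
  exact hg (hfix g (by rw [← mem_center_iff.mp hcZ g, mul_inv_cancel_right]))

end Automorphism

section ClosureInsert

variable {M : Type*} [Group M] {N : Subgroup M} {x y : M}

theorem commute_of_mem_closure {S : Set M} {z : M} (hS : ∀ s ∈ S, Commute z s) {τ : M}
    (hτ : τ ∈ closure S) : Commute z τ :=
  closure_induction hS (Commute.one_right z) (fun _ _ _ _ => Commute.mul_right)
    (fun _ _ => Commute.inv_right) hτ

theorem mem_or_mul_mem_of_mem_closure (hx : x * x = 1) (hxc : ∀ n ∈ N, Commute x n) {σ : M}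
    (hσ : σ ∈ closure (↑N ∪ {x})) : σ ∈ N ∨ x * σ ∈ N := by
  have hcomm : ∀ τ ∈ closure (↑N ∪ {x}), Commute x τ := fun τ =>
    commute_of_mem_closure fun s hs => hs.elim (hxc s) fun hs => hs ▸ Commute.refl x
  induction hσ using closure_induction with
  | mem s hs => exact hs.elim Or.inl fun hs => Or.inr (by rw [hs, hx]; exact N.one_mem)
  | one => exact Or.inl N.one_mem
  | mul s t hs _ ihs iht =>
    rcases ihs with hs' | hs' <;> rcases iht with ht' | ht'
    · exact Or.inl (N.mul_mem hs' ht')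
    · exact Or.inr (by rw [← mul_assoc, (hcomm s hs).eq, mul_assoc]; exact N.mul_mem hs' ht')
    · exact Or.inr (by rw [← mul_assoc]; exact N.mul_mem hs' ht')
    · refine Or.inl ?_
      have hst : x * s * (x * t) = s * t := by
        rw [(hcomm s hs).eq, mul_assoc, ← mul_assoc x, hx, one_mul]
      exact hst ▸ N.mul_mem hs' ht'
  | inv s hs ihs =>
    refine ihs.imp N.inv_mem fun hs' => ?_
    have hxs : (x * s)⁻¹ = x * s⁻¹ := by
      rw [mul_inv_rev, inv_eq_of_mul_eq_one_right hx, (hcomm s hs).inv_right.eq]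
    exact hxs ▸ N.inv_mem hs'

theorem index_subgroupOf_closure_eq_two (hx : x * x = 1) (hxc : ∀ n ∈ N, Commute x n)
    (hxN : x ∉ N) : (N.subgroupOf (closure (↑N ∪ {x}))).index = 2 := by
  refine index_eq_two_iff'.mpr ⟨⟨x, subset_closure (Or.inr rfl)⟩, fun σ => ?_⟩
  simp only [mem_subgroupOf, coe_mul]
  by_cases hσ : (σ : M) ∈ N
  · simp [hσ, N.mul_mem_cancel_right hσ, hxN]
  · simp [hσ, (mem_or_mul_mem_of_mem_closure hx hxc σ.2).resolve_left hσ]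

theorem twist_mem_closure (hx : x * x = 1) (hxc : ∀ n ∈ N, Commute x n) {σ : M}
    (hσ : σ ∈ closure (↑N ∪ {x})) : N.twist (y * x) σ ∈ closure (↑N ∪ {y}) := by
  by_cases hσN : σ ∈ N
  · rw [twist_of_mem hσN]
    exact subset_closure (Or.inl hσN)
  · rw [twist_of_notMem hσN, mul_assoc]
    exact mul_mem (subset_closure (Or.inr rfl)) (subset_closure
      (Or.inl ((mem_or_mul_mem_of_mem_closure hx hxc hσ).resolve_left hσN)))

theorem twist_twist_of_mem_closure (hx : x * x = 1) (hy : y * y = 1)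
    (hxc : ∀ n ∈ N, Commute x n) (hyN : y ∉ N) {σ : M} (hσ : σ ∈ closure (↑N ∪ {x})) :
    N.twist (x * y) (N.twist (y * x) σ) = σ := by
  refine twist_twist (by rw [mul_assoc, ← mul_assoc y, hy, one_mul, hx]) fun hσN hyxσ => ?_
  have hxσ := (mem_or_mul_mem_of_mem_closure hx hxc hσ).resolve_left hσN
  exact hyN ((N.mul_mem_cancel_right hxσ).mp (by rwa [← mul_assoc]))

theorem twist_mul_of_mem_closure (hx : x * x = 1) (hy : y * y = 1)
    (hxc : ∀ n ∈ N, Commute x n) (hyc : ∀ n ∈ N, Commute y n) (hxy : Commute x y)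
    (hxN : x ∉ N) {σ τ : M} (hσ : σ ∈ closure (↑N ∪ {x})) (hτ : τ ∈ closure (↑N ∪ {x})) :
    N.twist (y * x) (σ * τ) = N.twist (y * x) σ * N.twist (y * x) τ := by
  have hyx : Commute (y * x) σ := commute_of_mem_closure
    (fun s hs => hs.elim (fun hs => (hyc s hs).mul_left (hxc s hs))
      fun hs => hs ▸ hxy.symm.mul_left (Commute.refl x)) hσ
  refine twist_mul ?_ hyx ?_
  · rw [hxy.mul_mul_mul_comm, hy, hx, one_mul]
  · simpa only [mem_subgroupOf, MulMemClass.mk_mul_mk] using mul_mem_iff_of_index_two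
      (index_subgroupOf_closure_eq_two hx hxc hxN) (a := ⟨σ, hσ⟩) (b := ⟨τ, hτ⟩)

theorem fixesAndSends_of_commute (hx : x * x = 1) (hy : y * y = 1)
    (hxc : ∀ n ∈ N, Commute x n) (hyc : ∀ n ∈ N, Commute y n) (hxy : Commute x y)
    (hxN : x ∉ N) (hyN : y ∉ N) : FixesAndSends (N : Set M) x y := by
  refine ⟨{ toFun := fun σ => ⟨N.twist (y * x) σ, twist_mem_closure hx hxc σ.2⟩
            invFun := fun τ => ⟨N.twist (x * y) τ, twist_mem_closure hy hyc τ.2⟩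
            left_inv := fun σ => Subtype.ext (twist_twist_of_mem_closure hx hy hxc hyN σ.2)
            right_inv := fun τ => Subtype.ext (twist_twist_of_mem_closure hy hx hyc hxN τ.2)
            map_mul' := fun σ τ => Subtype.ext
              (twist_mul_of_mem_closure hx hy hxc hyc hxy hxN σ.2 τ.2) },
    fun σ hσ => twist_of_mem hσ, fun σ hσ => ?_⟩
  change N.twist (y * x) σ = y
  rw [hσ, twist_of_notMem hxN, mul_assoc, hx, mul_one]

end ClosureInsert

end Subgroup

open Subgroup

/-- If `Z(G) = {e, a}` has exactly two elements and `H₁ ≠ H₂` are distinct subgroups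
of `G` of index `2` with `Z(H₁) = Z(H₂) = Z(G)`, then `(Aut(G), Inn(G))` is not a
special pair: the maps `x_i` (`i = 1,2`) defined by `x_i(g) = g` for `g ∈ H_i` and
`x_i(g) = a·g` for `g ∉ H_i` are two distinct automorphisms of `G`, neither inner,
and there is an isomorphism from `⟨Inn(G) ∪ {x₁}⟩` onto `⟨Inn(G) ∪ {x₂}⟩` fixing
`Inn(G)` pointwise and sending `x₁` to `x₂`. -/
theorem not_isSpecialPair_aut_inn {G : Type u} [Group G] (a : G) (ha : a ≠ 1)
    (hZ : (Subgroup.center G : Set G) = {1, a})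
    (H₁ H₂ : Subgroup G) (hne : H₁ ≠ H₂)
    (hidx₁ : H₁.index = 2) (hidx₂ : H₂.index = 2)
    (hZH₁ : Subgroup.map H₁.subtype (Subgroup.center ↥H₁) = Subgroup.center G)
    (hZH₂ : Subgroup.map H₂.subtype (Subgroup.center ↥H₂) = Subgroup.center G) :
    ¬ IsSpecialPair (MulAut G)
        (((MulAut.conj : G →* MulAut G).range : Subgroup (MulAut G)) : Set (MulAut G)) ∧
      ∃ x₁ x₂ : MulAut G,
        (∀ g : G, (g ∈ H₁ → x₁ g = g) ∧ (g ∉ H₁ → x₁ g = a * g)) ∧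
        (∀ g : G, (g ∈ H₂ → x₂ g = g) ∧ (g ∉ H₂ → x₂ g = a * g)) ∧
        x₁ ≠ x₂ ∧
        x₁ ∉ (MulAut.conj : G →* MulAut G).range ∧
        x₂ ∉ (MulAut.conj : G →* MulAut G).range ∧
        FixesAndSends
          (((MulAut.conj : G →* MulAut G).range : Subgroup (MulAut G)) : Set (MulAut G))
          x₁ x₂ := by
  have hac : a ∈ center G := by rw [← SetLike.mem_coe, hZ]; exact Or.inr rfl
  have ha2 : a * a = 1 := mul_self_eq_one_of_coe_eq_pair hZ ha
  have haH₁ : a ∈ H₁ := map_subtype_le _ (hZH₁.ge hac)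
  have haH₂ : a ∈ H₂ := map_subtype_le _ (hZH₂.ge hac)
  obtain ⟨x₁, hx₁⟩ := exists_mulAut_coe_eq_twist hidx₁ hac ha2 haH₁
  obtain ⟨x₂, hx₂⟩ := exists_mulAut_coe_eq_twist hidx₂ hac ha2 haH₂
  have hx₁₂ : x₁ ≠ x₂ := fun h => hne (twist_left_injective ha (hx₁.symm.trans (h ▸ hx₂)))
  have hinn₁ := notMem_range_conj_of_coe_eq_twist hx₁ (by rintro rfl; simp at hidx₁) hZH₁.le ha
  have hinn₂ := notMem_range_conj_of_coe_eq_twist hx₂ (by rintro rfl; simp at hidx₂) hZH₂.le ha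
  have hFS : FixesAndSends _ x₁ x₂ := fixesAndSends_of_commute
    (mul_self_eq_one_of_coe_eq_twist hx₁ ha2 haH₁) (mul_self_eq_one_of_coe_eq_twist hx₂ ha2 haH₂)
    (commute_of_mem_range_conj hx₁ (normal_of_index_eq_two hidx₁) hac)
    (commute_of_mem_range_conj hx₂ (normal_of_index_eq_two hidx₂) hac)
    (commute_of_coe_eq_twist hx₁ (fun g => by rw [hx₂]; exact twist_mem_iff haH₁)
      (by rw [hx₂, twist_of_mem haH₂]))
    hinn₁ hinn₂
  refine ⟨fun h => hx₁₂ (h x₁ x₂ hFS), x₁, x₂, fun g => ⟨?_, ?_⟩, fun g => ⟨?_, ?_⟩,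
    hx₁₂, hinn₁, hinn₂, hFS⟩ <;> intro hg
  · rw [hx₁, twist_of_mem hg]
  · rw [hx₁, twist_of_notMem hg]
  · rw [hx₂, twist_of_mem hg]
  · rw [hx₂, twist_of_notMem hg]
end
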